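/- arXiv:0909.3903 — 2 statements merged into one kernel-verified Lean document; each statement's English description precedes it below -/
import Mathlib

section
/- Let G be a connected plane graph, T a spanning tree of G, and T♯ the dual tree in G*. For any edge e of T, the edges of G whose detours in T use e (equivalently, the edges f of G \ T such that the unique cycle in T + f contains e, together with e itself) correspond exactly to the edges of the unique cycle in T♯ + e*. -/
open SimpleGraph

/-- The congestion of the edge `e` of a spanning tree `T` of `G`: the number of edges
of `G` with one endpoint in each of the two components of `T - e`. -/
noncomputable def edgeCong {V : Type*} (G T : SimpleGraph V) (e : Sym2 V) : ℕ :=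
  {f | f ∈ G.edgeSet ∧ ∃ x y, f = s(x, y) ∧ ¬ ((T.deleteEdges {e}).Reachable x y)}.ncard

/-- The edge congestion `ec(G:T)`. -/
noncomputable def treeCong {V : Type*} (G T : SimpleGraph V) : ℕ :=
  sSup (edgeCong G T '' T.edgeSet)

/-- `T` is a spanning tree of `G`. -/
def IsSpanningTree {V : Type*} (G T : SimpleGraph V) : Prop := T ≤ G ∧ T.IsTree

/-- The spanning tree congestion `s(G)`. -/
noncomputable def stc {V : Type*} (G : SimpleGraph V) : ℕ :=
  sInf {n | ∃ T, IsSpanningTree G T ∧ treeCong G T = n}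

/-- `D` is the edge set of a cycle of `G`. -/
def IsCycleEdges {V : Type*} (G : SimpleGraph V) (D : Set (Sym2 V)) : Prop :=
  ∃ (v : V) (c : G.Walk v v), c.IsCycle ∧ D = {e | e ∈ c.edges}

/-- `D` is an edge cut of `G`: the set of edges between some vertex set `A`
and its complement. -/
def IsCutEdges {V : Type*} (G : SimpleGraph V) (D : Set (Sym2 V)) : Prop :=
  ∃ A : Set V, D = {f | f ∈ G.edgeSet ∧ ∃ x ∈ A, ∃ y ∈ Aᶜ, f = s(x, y)}

/-- `D` is a minimal (nonempty) edge cut of `G`. -/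
def IsMinCut {V : Type*} (G : SimpleGraph V) (D : Set (Sym2 V)) : Prop :=
  IsCutEdges G D ∧ D.Nonempty ∧
    ∀ D' ⊆ D, IsCutEdges G D' → D'.Nonempty → D' = D

/-- A connected plane graph `G` together with its dual graph `Gd`, presented
combinatorially (Whitney): vertices of `Gd` are the faces of `G`, `O` is the exterior
face, `d` is the bijection between edges of `G` and edges of `Gd` (each dual edge joins
the two faces on either side of the original edge), and duality is characterized by
cycles of one graph corresponding to minimal edge cuts of the other. -/
structure PlaneDual (V F : Type*) where
  G : SimpleGraph V
  Gd : SimpleGraph F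
  O : F
  d : Sym2 V → Sym2 F
  dBij : Set.BijOn d G.edgeSet Gd.edgeSet
  conn : G.Connected
  connd : Gd.Connected
  cycle_iff_minCut : ∀ D ⊆ G.edgeSet, IsCycleEdges G D ↔ IsMinCut Gd (d '' D)
  minCut_iff_cycle : ∀ D ⊆ G.edgeSet, IsMinCut G D ↔ IsCycleEdges Gd (d '' D)

variable {V F : Type*}

/-- An outer edge: an edge of `G` on the boundary of the exterior face. -/
def IsOuter (P : PlaneDual V F) (e : Sym2 V) : Prop :=
  e ∈ P.G.edgeSet ∧ P.O ∈ P.d e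

/-- The index `i(F, e)`: the length of a shortest path in the dual graph from the
exterior face `O` to the face `Fc` whose first edge is `e*`. -/
noncomputable def pIndex (P : PlaneDual V F) (Fc : F) (e : Sym2 V) : ℕ :=
  sInf {n | ∃ p : P.Gd.Walk P.O Fc, p.IsPath ∧ p.edges.head? = some (P.d e) ∧ p.length = n}

/-- The absolute index `i(F) = min over outer edges e of i(F, e)`. -/
noncomputable def absIndex (P : PlaneDual V F) (Fc : F) : ℕ :=
  sInf {n | ∃ e, IsOuter P e ∧ pIndex P Fc e = n}

/-- The dual tree `T♯` of a spanning tree `T` of `G`: the spanning subgraph of the dual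
graph with edge set `{e* : e ∉ E(T)}`. -/
def dualTree (P : PlaneDual V F) (T : SimpleGraph V) : SimpleGraph F :=
  SimpleGraph.fromEdgeSet (P.d '' (P.G.edgeSet \ T.edgeSet))

/-- `e` lies on the detour of `f`: a path in `T` joining the endpoints of `f`
passes through `e` (for a tree `T` this path is unique). -/
def OnDetour {W : Type*} (T : SimpleGraph W) (e f : Sym2 W) : Prop :=
  ∃ x y, f = s(x, y) ∧ ∃ p : T.Walk x y, p.IsPath ∧ e ∈ p.edges

/-!
The edges whose detour in `T` uses the tree edge `e` are exactly the edges of `G` joining the two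
components of `T - e`. Both components are connected, so this fundamental cut is a bond, and by
duality its dual edges form a cycle of `G*`. That cycle consists of `e*` and duals of non-tree
edges only, so it lies in `T♯ + e*`. Finally `T♯` is acyclic, hence `T♯ + e*` has exactly one
cycle.
-/

namespace SimpleGraph

section Cuts

variable {G H : SimpleGraph V} {A : Set V}

def cutEdges (G : SimpleGraph V) (A : Set V) : Set (Sym2 V) :=
  {f | f ∈ G.edgeSet ∧ ∃ x ∈ A, ∃ y ∈ Aᶜ, f = s(x, y)}

lemma mk_mem_cutEdges_iff {x y : V} :
    s(x, y) ∈ cutEdges G A ↔ G.Adj x y ∧ ¬(x ∈ A ↔ y ∈ A) := by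
  constructor
  · rintro ⟨hxy, a, ha, b, hb, hab⟩
    refine ⟨hxy, ?_⟩
    rcases Sym2.eq_iff.mp hab with ⟨rfl, rfl⟩ | ⟨rfl, rfl⟩ <;> tauto
  · rintro ⟨hxy, hA⟩
    by_cases hx : x ∈ A
    · exact ⟨hxy, x, hx, y, by tauto, rfl⟩
    · exact ⟨hxy, y, by tauto, x, hx, Sym2.eq_swap⟩

lemma Reachable.mem_iff_mem_of_forall_adj (hA : ∀ x y, G.Adj x y → (x ∈ A ↔ y ∈ A))
    {x y : V} (h : G.Reachable x y) : x ∈ A ↔ y ∈ A := by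
  obtain ⟨p⟩ := h
  induction p with
  | nil => rfl
  | cons hadj _ ih => exact (hA _ _ hadj).trans ih

/-- A cut whose two sides are connected is a bond; `hA` says that the sides `A` and `Aᶜ` are the
connected components of the spanning subgraph `H`. -/
lemma isMinCut_cutEdges (hHG : H ≤ G) (hA : ∀ x y, H.Reachable x y ↔ (x ∈ A ↔ y ∈ A))
    (hne : (cutEdges G A).Nonempty) : IsMinCut G (cutEdges G A) := by
  refine ⟨⟨A, rfl⟩, hne, ?_⟩
  rintro D' hD' ⟨A', rfl⟩ ⟨f, hf⟩
  refine hD'.antisymm fun g hg => ?_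
  have hside : ∀ x y, (x ∈ A ↔ y ∈ A) → (x ∈ A' ↔ y ∈ A') := fun x y hxy =>
    ((hA x y).mpr hxy).mem_iff_mem_of_forall_adj fun a b hab => by
      by_contra hcross
      have hab' := hD' (mk_mem_cutEdges_iff.mpr ⟨hHG hab, hcross⟩)
      exact (mk_mem_cutEdges_iff.mp hab').2 ((hA a b).mp hab.reachable)
  induction f using Sym2.ind with | h a b => ?_
  induction g using Sym2.ind with | h x y => ?_
  have hf' := mk_mem_cutEdges_iff.mp hf
  have hfA := mk_mem_cutEdges_iff.mp (hD' hf)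
  have hg' := mk_mem_cutEdges_iff.mp hg
  refine mk_mem_cutEdges_iff.mpr ⟨hg'.1, ?_⟩
  -- `A'` is a union of sides of `A` and `f` crosses it, so `A'` is `A` or `Aᶜ`.
  have := hside x a; have := hside x b; have := hside y a; have := hside y b
  grind

lemma IsCutEdges.exists_mem_edgeSet {T : SimpleGraph V} (hTG : T ≤ G) (hT : T.Connected)
    {D : Set (Sym2 V)} (hD : IsCutEdges G D) (hne : D.Nonempty) : ∃ f ∈ D, f ∈ T.edgeSet := by
  obtain ⟨A, rfl⟩ := hD
  obtain ⟨_, -, x, hx, y, hy, rfl⟩ := hne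
  obtain ⟨d, -, hdx, hdy⟩ := (hT.preconnected x y).some.exists_boundary_dart A hx hy
  exact ⟨s(d.fst, d.snd), mk_mem_cutEdges_iff.mpr ⟨hTG d.adj, by tauto⟩, d.adj⟩

end Cuts

section Trees

variable {G T : SimpleGraph V}

lemma Reachable.deleteEdges_left_or_right {x y z : V} (h : G.Reachable z x) :
    (G.deleteEdges {s(x, y)}).Reachable z x ∨ (G.deleteEdges {s(x, y)}).Reachable z y := by
  obtain ⟨p⟩ := h
  induction p with
  | nil => exact .inl .rfl
  | @cons z c x hzc _ ih =>
    by_cases he : s(z, c) = s(x, y)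
    · rcases Sym2.eq_iff.mp he with ⟨rfl, -⟩ | ⟨rfl, -⟩
      · exact .inl .rfl
      · exact .inr .rfl
    · have hzc' : (G.deleteEdges {s(x, y)}).Adj z c := by simp [hzc, he]
      exact ih.imp hzc'.reachable.trans hzc'.reachable.trans

lemma IsTree.reachable_deleteEdges_iff {x₀ y₀ : V} (hT : T.IsTree) (h₀ : T.Adj x₀ y₀)
    (x y : V) : (T.deleteEdges {s(x₀, y₀)}).Reachable x y ↔
      ((T.deleteEdges {s(x₀, y₀)}).Reachable x₀ x ↔
        (T.deleteEdges {s(x₀, y₀)}).Reachable x₀ y) := by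
  have hsep : ¬(T.deleteEdges {s(x₀, y₀)}).Reachable x₀ y₀ :=
    isAcyclic_iff_forall_adj_isBridge.mp hT.isAcyclic h₀
  refine ⟨fun h => ⟨fun hx => hx.trans h, fun hy => hy.trans h.symm⟩, fun hxy => ?_⟩
  rcases (hT.1.preconnected x x₀).deleteEdges_left_or_right (y := y₀) with hx | hx <;>
  rcases (hT.1.preconnected y x₀).deleteEdges_left_or_right (y := y₀) with hy | hy
  · exact hx.trans hy.symm
  · exact absurd ((hxy.mp hx.symm).trans hy) hsep
  · exact absurd ((hxy.mpr hy.symm).trans hx) hsep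
  · exact hx.trans hy.symm

lemma IsTree.onDetour_mk_iff (hT : T.IsTree) {e : Sym2 V} {x y : V} :
    OnDetour T e s(x, y) ↔ ¬(T.deleteEdges {e}).Reachable x y := by
  constructor
  · rintro ⟨x', y', hxy, p, hp, hep⟩ hreach
    have hreach' : (T.deleteEdges {e}).Reachable x' y' := by
      rcases Sym2.eq_iff.mp hxy with ⟨rfl, rfl⟩ | ⟨rfl, rfl⟩
      exacts [hreach, hreach.symm]
    obtain ⟨q, hq⟩ := hreach'.exists_isPath
    have hpq : p = q.mapLe (deleteEdges_le _) :=
      congrArg Subtype.val ((hT.isAcyclic.subsingleton_path _ _).elim ⟨p, hp⟩ ⟨_, hq.mapLe _⟩)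
    rw [hpq, Walk.edges_mapLe_eq_edges] at hep
    simpa using q.edges_subset_edgeSet hep
  · intro hsep
    obtain ⟨p, hp⟩ := hT.1.preconnected.exists_isPath x y
    exact ⟨x, y, rfl, p, hp, p.mem_edges_of_not_reachable_deleteEdges hsep⟩

lemma IsTree.eq_or_notMem_edgeSet_of_onDetour (hT : T.IsTree) {e f : Sym2 V}
    (hf : OnDetour T e f) : f = e ∨ f ∉ T.edgeSet := by
  induction f using Sym2.ind with | h x y => ?_
  rw [hT.onDetour_mk_iff] at hf
  by_contra! hfT
  exact hf (Adj.reachable (by simpa [hfT.1] using hfT.2))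

lemma IsTree.setOf_onDetour_eq_cutEdges (hT : T.IsTree) {x₀ y₀ : V} (h₀ : T.Adj x₀ y₀) :
    {f | f ∈ G.edgeSet ∧ OnDetour T s(x₀, y₀) f} =
      cutEdges G {z | (T.deleteEdges {s(x₀, y₀)}).Reachable x₀ z} := by
  ext f
  induction f using Sym2.ind with | h x y => ?_
  rw [Set.mem_ofPred_eq, mk_mem_cutEdges_iff, hT.onDetour_mk_iff, hT.reachable_deleteEdges_iff h₀]
  rfl

lemma IsTree.isMinCut_setOf_onDetour (hTG : T ≤ G) (hT : T.IsTree) {e : Sym2 V}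
    (he : e ∈ T.edgeSet) : IsMinCut G {f | f ∈ G.edgeSet ∧ OnDetour T e f} := by
  induction e using Sym2.ind with | h x₀ y₀ => ?_
  have hsep : ¬(T.deleteEdges {s(x₀, y₀)}).Reachable x₀ y₀ :=
    isAcyclic_iff_forall_adj_isBridge.mp hT.isAcyclic he
  rw [hT.setOf_onDetour_eq_cutEdges he]
  exact isMinCut_cutEdges ((deleteEdges_le _).trans hTG) (hT.reachable_deleteEdges_iff he)
    ⟨_, mk_mem_cutEdges_iff.mpr ⟨hTG he, (hT.reachable_deleteEdges_iff he _ _).not.mp hsep⟩⟩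

end Trees

section Cycles

variable {G : SimpleGraph V}

lemma Walk.IsPath.exists_eq_cons_of_mem_edges {u v w : V} {p : G.Walk u v} (hp : p.IsPath)
    (hw : s(u, w) ∈ p.edges) : ∃ (h : G.Adj u w) (r : G.Walk w v), p = .cons h r := by
  obtain rfl := hp.eq_snd_of_mem_edges hw
  have hnil : ¬p.Nil := Walk.edges_eq_nil.not.mp (List.ne_nil_of_mem hw)
  exact ⟨p.adj_snd hnil, p.tail, (p.cons_tail_eq hnil).symm⟩

lemma Walk.IsCycle.exists_eq_cons_or_reverse_eq_cons {u w : V} {c : G.Walk u u}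
    (hc : c.IsCycle) (hw : s(u, w) ∈ c.edges) :
    ∃ (h : G.Adj u w) (r : G.Walk w u), c = cons h r ∨ c.reverse = cons h r := by
  cases c with
  | nil => simp at hw
  | @cons _ x _ h q =>
    by_cases hx : x = w
    · subst hx
      exact ⟨h, q, .inl rfl⟩
    · have hwq : s(u, w) ∈ q.reverse.edges := by
        simpa [Ne.symm hx, h.ne] using hw
      obtain ⟨h', r, hr⟩ :=
        ((cons_isCycle_iff q h).mp hc).1.reverse.exists_eq_cons_of_mem_edges hwq
      exact ⟨h', r.append (cons h.symm nil), .inr (by rw [reverse_cons, hr, cons_append])⟩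

lemma Walk.IsCycle.exists_isCycle_cons_perm {v u w : V} {c : G.Walk v v} (hc : c.IsCycle)
    (hw : s(u, w) ∈ c.edges) :
    ∃ (h : G.Adj u w) (r : G.Walk w u), (cons h r).IsCycle ∧ (cons h r).edges.Perm c.edges := by
  classical
  have hu : u ∈ c.support := c.fst_mem_support_of_mem_edges hw
  have hrot := c.rotate_edges u hu
  obtain ⟨h, r, hr | hr⟩ := (hc.rotate hu).exists_eq_cons_or_reverse_eq_cons (hrot.mem_iff.mpr hw)
  · exact ⟨h, r, hr ▸ hc.rotate hu, hr ▸ hrot.perm⟩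
  · refine ⟨h, r, hr ▸ (hc.rotate hu).reverse, hr ▸ ?_⟩
    rw [edges_reverse]
    exact (List.reverse_perm _).trans hrot.perm

lemma Walk.IsCycle.exists_isPath_edges_eq_insert {v u w : V} {c : G.Walk v v} (hc : c.IsCycle)
    (hw : s(u, w) ∈ c.edges) : ∃ r : G.Walk w u, r.IsPath ∧ s(u, w) ∉ r.edges ∧
      {g | g ∈ c.edges} = insert s(u, w) {g | g ∈ r.edges} := by
  obtain ⟨h, r, hcyc, hperm⟩ := hc.exists_isCycle_cons_perm hw
  obtain ⟨hr, hwr⟩ := (cons_isCycle_iff r h).mp hcyc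
  refine ⟨r, hr, hwr, ?_⟩
  ext g
  simp [← hperm.mem_iff]

lemma Walk.IsCycle.mem_edges_of_isAcyclic_deleteEdges {v : V} {a : Sym2 V} {c : G.Walk v v}
    (hc : c.IsCycle) (ha : (G.deleteEdges {a}).IsAcyclic) : a ∈ c.edges := by
  by_contra hac
  exact ha _ (hc.toDeleteEdges _ {a} fun g hg hga => hac (hga ▸ hg))

lemma Walk.IsCycle.edges_eq_of_isAcyclic_deleteEdges {v₁ v₂ : V} {a : Sym2 V}
    {c₁ : G.Walk v₁ v₁} {c₂ : G.Walk v₂ v₂} (hc₁ : c₁.IsCycle) (hc₂ : c₂.IsCycle)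
    (ha : (G.deleteEdges {a}).IsAcyclic) : {g | g ∈ c₁.edges} = {g | g ∈ c₂.edges} := by
  induction a using Sym2.ind with | h u w => ?_
  obtain ⟨r₁, hr₁, hwr₁, hc₁r₁⟩ :=
    hc₁.exists_isPath_edges_eq_insert (hc₁.mem_edges_of_isAcyclic_deleteEdges ha)
  obtain ⟨r₂, hr₂, hwr₂, hc₂r₂⟩ :=
    hc₂.exists_isPath_edges_eq_insert (hc₂.mem_edges_of_isAcyclic_deleteEdges ha)
  have hr₁' : ∀ g ∈ r₁.edges, g ∉ ({s(u, w)} : Set (Sym2 V)) := fun g hg hgw => hwr₁ (hgw ▸ hg)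
  have hr₂' : ∀ g ∈ r₂.edges, g ∉ ({s(u, w)} : Set (Sym2 V)) := fun g hg hgw => hwr₂ (hgw ▸ hg)
  have hr := (ha.subsingleton_path w u).elim
    ⟨r₁.toDeleteEdges _ hr₁', hr₁.transfer _⟩ ⟨r₂.toDeleteEdges _ hr₂', hr₂.transfer _⟩
  have hedges : r₁.edges = r₂.edges := by simpa using congrArg (fun p => p.1.edges) hr
  rw [hc₁r₁, hc₂r₂, hedges]

lemma deleteEdges_fromEdgeSet_insert_le (a : Sym2 V) :
    (fromEdgeSet (insert a G.edgeSet)).deleteEdges {a} ≤ G := fun x y h => by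
  simp only [deleteEdges_adj, fromEdgeSet_adj, Set.mem_insert_iff, mem_edgeSet,
    Set.mem_singleton_iff] at h
  tauto

end Cycles

end SimpleGraph

section Duality

variable (P : PlaneDual V F)

lemma dualTree_edgeSet (T : SimpleGraph V) :
    (dualTree P T).edgeSet = P.d '' (P.G.edgeSet \ T.edgeSet) := by
  rw [dualTree, edgeSet_fromEdgeSet, sdiff_eq_left, Set.disjoint_left]
  rintro _ ⟨f, hf, rfl⟩
  exact P.Gd.not_isDiag_of_mem_edgeSet (P.dBij.mapsTo hf.1)

lemma dualTree_le (T : SimpleGraph V) : dualTree P T ≤ P.Gd := by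
  rw [← edgeSet_subset_edgeSet, dualTree_edgeSet]
  exact (P.dBij.mapsTo.mono_left Set.sdiff_subset).image_subset

/-- A cycle of `T♯` would be dual to a bond of `G` avoiding the spanning tree `T`. -/
lemma dualTree_isAcyclic {T : SimpleGraph V} (hT : IsSpanningTree P.G T) :
    (dualTree P T).IsAcyclic := by
  intro v c hc
  set D := {f | f ∈ P.G.edgeSet \ T.edgeSet ∧ P.d f ∈ c.edges}
  have hD : P.d '' D = {g | g ∈ c.edges} := by
    ext g
    refine ⟨fun ⟨f, ⟨_, hf⟩, hfg⟩ => hfg ▸ hf, fun hg => ?_⟩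
    obtain ⟨f, hf, rfl⟩ := dualTree_edgeSet P T ▸ c.edges_subset_edgeSet hg
    exact ⟨f, ⟨hf, hg⟩, rfl⟩
  have hcut : IsMinCut P.G D := (P.minCut_iff_cycle D fun f hf => hf.1.1).mpr
    ⟨v, c.mapLe (dualTree_le P T), hc.mapLe _, by rw [hD, Walk.edges_mapLe_eq_edges]⟩
  obtain ⟨f, hfD, hfT⟩ := hcut.1.exists_mem_edgeSet hT.1 hT.2.1 hcut.2.1
  exact hfD.1.2 hfT

lemma image_setOf_onDetour_subset {T : SimpleGraph V} (hT : T.IsTree) {e : Sym2 V} :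
    P.d '' {f | f ∈ P.G.edgeSet ∧ OnDetour T e f} ⊆
      (fromEdgeSet (insert (P.d e) (dualTree P T).edgeSet)).edgeSet := by
  rintro _ ⟨f, ⟨hf, hfe⟩, rfl⟩
  rw [edgeSet_fromEdgeSet]
  refine ⟨?_, P.Gd.not_isDiag_of_mem_edgeSet (P.dBij.mapsTo hf)⟩
  rcases hT.eq_or_notMem_edgeSet_of_onDetour hfe with rfl | hfT
  · exact Set.mem_insert _ _
  · exact Set.mem_insert_of_mem _ (dualTree_edgeSet P T ▸ ⟨f, ⟨hf, hfT⟩, rfl⟩)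

end Duality

theorem stmt5 (P : PlaneDual V F) (T : SimpleGraph V) (hT : IsSpanningTree P.G T)
    (e : Sym2 V) (he : e ∈ T.edgeSet) :
    ∀ (v : F) (c : (SimpleGraph.fromEdgeSet
        (insert (P.d e) (dualTree P T).edgeSet)).Walk v v), c.IsCycle →
      {g | g ∈ c.edges} = P.d '' {f | f ∈ P.G.edgeSet ∧ OnDetour T e f} := by
  intro v c hc
  obtain ⟨v', c', hc', hc'D⟩ :=
    (P.minCut_iff_cycle _ fun f hf => hf.1).mp (hT.2.isMinCut_setOf_onDetour hT.1 he)
  have hc'H : ∀ g ∈ c'.edges, g ∈ (fromEdgeSet (insert (P.d e) (dualTree P T).edgeSet)).edgeSet :=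
    fun g hg => image_setOf_onDetour_subset P hT.2 (hc'D.symm.subset hg)
  have hacyc := (dualTree_isAcyclic P hT).anti (deleteEdges_fromEdgeSet_insert_le (P.d e))
  rw [hc'D, hc.edges_eq_of_isAcyclic_deleteEdges (hc'.transfer hc'H) hacyc, Walk.edges_transfer]
end

section
/- Let G be a connected plane graph, T a spanning tree, T♯ the dual tree, and e an edge of T joining components whose bounding faces are F1 and F2. Then the congestion e_G(A_e,B_e) equals the length of the unique cycle in T♯ ∪ {e*}. -/
open SimpleGraph

variable {V F : Type*}

/-!
The edges of `G` joining the two components of `T - e` form the fundamental cut `S_e`. It is a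
minimal cut, and it is the only nonempty cut of `G` containing no edge of `T` other than `e`:
such a cut is crossed by some edge of the connected graph `T`, hence by `e`, and by no other
edge of `T`, so its sides are the two components of `T - e`. Whitney duality sends `S_e` to a
cycle of `G*` whose edges are duals of `e` and of non-tree edges, i.e. a cycle of `T♯ + e*`.
Conversely every cycle of `T♯ + e*` is dual to a minimal cut of `G` meeting `T` only in `e`, which
is therefore `S_e`, so its length is `|S_e| = e_G(A_e, B_e)`.
-/

namespace SimpleGraph

variable {G H T : SimpleGraph V} {A : Set V} {u v w x y : V}

def edgeCut (G : SimpleGraph V) (A : Set V) : Set (Sym2 V) :=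
  {f | f ∈ G.edgeSet ∧ ∃ x ∈ A, ∃ y ∈ Aᶜ, f = s(x, y)}

def fundamentalCut (G T : SimpleGraph V) (e : Sym2 V) : Set (Sym2 V) :=
  {f | f ∈ G.edgeSet ∧ ∃ x y, f = s(x, y) ∧ ¬(T.deleteEdges {e}).Reachable x y}

theorem mem_edgeCut : s(x, y) ∈ G.edgeCut A ↔ G.Adj x y ∧ ¬(x ∈ A ↔ y ∈ A) := by
  refine and_congr_right fun _ => ⟨?_, fun h => ?_⟩
  · rintro ⟨a, ha, b, hb, hab⟩
    rcases Sym2.eq_iff.1 hab with ⟨rfl, rfl⟩ | ⟨rfl, rfl⟩ <;> tauto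
  · by_cases hx : x ∈ A
    · exact ⟨x, hx, y, fun hy => h (iff_of_true hx hy), rfl⟩
    · exact ⟨y, not_not.1 fun hy => h (iff_of_false hx hy), x, hx, Sym2.eq_swap⟩

theorem mem_fundamentalCut {e : Sym2 V} :
    s(x, y) ∈ G.fundamentalCut T e ↔ G.Adj x y ∧ ¬(T.deleteEdges {e}).Reachable x y := by
  rw [fundamentalCut, Set.mem_ofPred_eq, mem_edgeSet]
  refine and_congr_right fun _ => ⟨?_, fun h => ⟨x, y, rfl, h⟩⟩
  rintro ⟨a, b, hab, h⟩
  rcases Sym2.eq_iff.1 hab with ⟨rfl, rfl⟩ | ⟨rfl, rfl⟩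
  exacts [h, fun h' => h h'.symm]

theorem fundamentalCut_eq_edgeCut_of_reachable_iff {e : Sym2 V}
    (h : ∀ x y, (T.deleteEdges {e}).Reachable x y ↔ (x ∈ A ↔ y ∈ A)) :
    G.fundamentalCut T e = G.edgeCut A := by
  ext f
  induction f using Sym2.ind with
  | _ x y => rw [mem_fundamentalCut, mem_edgeCut, h]

theorem fundamentalCut_inter_edgeSet_subset (e : Sym2 V) :
    G.fundamentalCut T e ∩ T.edgeSet ⊆ {e} := by
  rintro f ⟨⟨-, x, y, rfl, hxy⟩, hf⟩
  by_contra hne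
  exact hxy (deleteEdges_adj.2 ⟨hf, hne⟩).reachable

theorem Reachable.mem_of_forall_adj (hA : ∀ x y, H.Adj x y → x ∈ A → y ∈ A)
    (h : H.Reachable x y) (hx : x ∈ A) : y ∈ A := by
  obtain ⟨p⟩ := h
  by_contra hy
  obtain ⟨d, -, hd₁, hd₂⟩ := p.exists_boundary_dart A hx hy
  exact hd₂ (hA _ _ d.adj hd₁)

theorem Reachable.mem_iff_mem (hA : ∀ x y, H.Adj x y → (x ∈ A ↔ y ∈ A))
    (h : H.Reachable x y) : x ∈ A ↔ y ∈ A :=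
  ⟨h.mem_of_forall_adj fun a b hab => (hA a b hab).1,
    h.symm.mem_of_forall_adj fun a b hab => (hA b a hab.symm).2⟩

theorem Connected.reachable_or_reachable_deleteEdges (hT : T.Connected) (huw : T.Adj u w)
    (v : V) :
    (T.deleteEdges {s(u, w)}).Reachable u v ∨ (T.deleteEdges {s(u, w)}).Reachable w v := by
  refine (hT.preconnected u v).mem_of_forall_adj (A := {v | _ ∨ _}) ?_ (Or.inl .rfl)
  intro a b hab ha
  by_cases he : s(a, b) = s(u, w)
  · rcases Sym2.eq_iff.1 he with ⟨rfl, rfl⟩ | ⟨rfl, rfl⟩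
    exacts [Or.inr .rfl, Or.inl .rfl]
  · have hab' : (T.deleteEdges {s(u, w)}).Adj a b := deleteEdges_adj.2 ⟨hab, he⟩
    exact ha.imp (·.trans hab'.reachable) (·.trans hab'.reachable)

theorem Connected.reachable_deleteEdges_iff (hT : T.Connected) (huw : T.Adj u w)
    (hcross : ∀ x y, T.Adj x y → s(x, y) ≠ s(u, w) → (x ∈ A ↔ y ∈ A))
    (hsep : ¬(u ∈ A ↔ w ∈ A)) (x y : V) :
    (T.deleteEdges {s(u, w)}).Reachable x y ↔ (x ∈ A ↔ y ∈ A) := by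
  set T' := T.deleteEdges {s(u, w)}
  have hside : ∀ {x y}, T'.Reachable x y → (x ∈ A ↔ y ∈ A) :=
    Reachable.mem_iff_mem fun a b hab =>
      hcross a b (deleteEdges_adj.1 hab).1 (by simpa using (deleteEdges_adj.1 hab).2)
  have hclass : ∀ v, T'.Reachable u v ↔ (u ∈ A ↔ v ∈ A) := fun v =>
    ⟨hside, fun hv => (hT.reachable_or_reachable_deleteEdges huw v).resolve_right
      fun hwv => hsep (hv.trans (hside hwv).symm)⟩
  refine ⟨hside, fun hxy => ?_⟩
  by_cases hx : T'.Reachable u x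
  · exact hx.symm.trans ((hclass y).2 (((hclass x).1 hx).trans hxy))
  · have hy : ¬T'.Reachable u y := fun hy => hx ((hclass x).2 (((hclass y).1 hy).trans hxy.symm))
    exact ((hT.reachable_or_reachable_deleteEdges huw x).resolve_left hx).symm.trans
      ((hT.reachable_or_reachable_deleteEdges huw y).resolve_left hy)

theorem IsTree.fundamentalCut_eq_edgeCut (hT : T.IsTree) (huw : T.Adj u w) :
    G.fundamentalCut T s(u, w) = G.edgeCut {v | (T.deleteEdges {s(u, w)}).Reachable u v} := by
  refine fundamentalCut_eq_edgeCut_of_reachable_iff <| hT.connected.reachable_deleteEdges_iff huw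
    (fun x y hxy hne => ⟨fun hx => hx.trans (deleteEdges_adj.2 ⟨hxy, hne⟩).reachable,
      fun hy => hy.trans (deleteEdges_adj.2 ⟨hxy, hne⟩).reachable.symm⟩) ?_
  simpa using isBridge_iff.1 (isAcyclic_iff_forall_adj_isBridge.1 hT.isAcyclic huw)

theorem eq_fundamentalCut_of_inter_edgeSet_subset (hTG : T ≤ G) (hT : T.Connected)
    {e : Sym2 V} (he : e ∈ T.edgeSet) {D : Set (Sym2 V)} (hcut : IsCutEdges G D)
    (hne : D.Nonempty) (hD : D ∩ T.edgeSet ⊆ {e}) :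
    D = G.fundamentalCut T e := by
  cases e with | h u w
  obtain ⟨A, rfl⟩ := hcut
  have htree : ∀ x y, T.Adj x y → ¬(x ∈ A ↔ y ∈ A) → s(x, y) = s(u, w) := fun x y hxy hA =>
    hD ⟨mem_edgeCut.2 ⟨hTG hxy, hA⟩, hxy⟩
  obtain ⟨_, -, x, hx, y, hy, rfl⟩ := hne
  obtain ⟨d, -, hd₁, hd₂⟩ := (hT.preconnected x y).some.exists_boundary_dart A hx hy
  have hsep : ¬(u ∈ A ↔ w ∈ A) := by
    rcases Sym2.eq_iff.1 (htree _ _ d.adj (by tauto)) with ⟨rfl, rfl⟩ | ⟨rfl, rfl⟩ <;> tauto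
  exact (fundamentalCut_eq_edgeCut_of_reachable_iff <| hT.reachable_deleteEdges_iff he
    (fun x y hxy hne => not_not.1 fun hA => hne (htree x y hxy hA)) hsep).symm

theorem IsTree.isMinCut_fundamentalCut (hT : T.IsTree) (hTG : T ≤ G) {e : Sym2 V}
    (he : e ∈ T.edgeSet) : IsMinCut G (G.fundamentalCut T e) := by
  cases e with | h u w
  refine ⟨⟨_, hT.fundamentalCut_eq_edgeCut he⟩, ⟨s(u, w), mem_fundamentalCut.2 ⟨hTG he, ?_⟩⟩,
    fun D hD hcut hne => eq_fundamentalCut_of_inter_edgeSet_subset hTG hT.connected he hcut hne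
      ((Set.inter_subset_inter_left _ hD).trans (fundamentalCut_inter_edgeSet_subset _))⟩
  exact isAcyclic_iff_forall_adj_isBridge.1 hT.isAcyclic he

theorem Walk.IsTrail.ncard_edgeSet {p : G.Walk u v} (hp : p.IsTrail) :
    p.edgeSet.ncard = p.length := by
  classical
  rw [← Walk.coe_edges_toFinset, Set.ncard_coe_finset, List.toFinset_card_of_nodup hp.edges_nodup,
    Walk.length_edges]

end SimpleGraph

namespace PlaneDual

open SimpleGraph

variable (P : PlaneDual V F) {T : SimpleGraph V} {e f : Sym2 V}

def dualTreeInsert (T : SimpleGraph V) (e : Sym2 V) : SimpleGraph F :=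
  fromEdgeSet (insert (P.d e) (dualTree P T).edgeSet)

variable {P}

theorem d_mem_edgeSet_dualTreeInsert_iff (he : e ∈ P.G.edgeSet) (hf : f ∈ P.G.edgeSet) :
    P.d f ∈ (P.dualTreeInsert T e).edgeSet ↔ f = e ∨ f ∉ T.edgeSet := by
  have hdiag : ¬(P.d f).IsDiag := P.Gd.not_isDiag_of_mem_edgeSet (P.dBij.mapsTo hf)
  rw [dualTreeInsert, dualTree, edgeSet_fromEdgeSet, edgeSet_fromEdgeSet]
  simp only [Set.mem_sdiff, Set.mem_insert_iff, Sym2.mem_diagSet, hdiag, not_false_eq_true,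
    and_true, P.dBij.injOn.eq_iff hf he,
    P.dBij.injOn.mem_image_iff Set.sdiff_subset hf, hf, true_and]

theorem dualTreeInsert_le (he : e ∈ P.G.edgeSet) : P.dualTreeInsert T e ≤ P.Gd := by
  rw [← edgeSet_subset_edgeSet, dualTreeInsert, dualTree, edgeSet_fromEdgeSet,
    edgeSet_fromEdgeSet]
  rintro _ ⟨rfl | ⟨⟨f, hf, rfl⟩, -⟩, -⟩
  exacts [P.dBij.mapsTo he, P.dBij.mapsTo hf.1]

theorem exists_isCycle_dualTreeInsert (hT : IsSpanningTree P.G T) (he : e ∈ T.edgeSet) :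
    ∃ (v : F) (c : (P.dualTreeInsert T e).Walk v v), c.IsCycle := by
  obtain ⟨v, c, hc, hcut⟩ := (P.minCut_iff_cycle _ fun _ hf => hf.1).1
    (hT.2.isMinCut_fundamentalCut hT.1 he)
  have hedges : ∀ g ∈ c.edges, g ∈ (P.dualTreeInsert T e).edgeSet := by
    intro g hg
    obtain ⟨f, hf, rfl⟩ : g ∈ P.d '' P.G.fundamentalCut T e := hcut ▸ hg
    refine (d_mem_edgeSet_dualTreeInsert_iff (edgeSet_mono hT.1 he) hf.1).2
      (or_iff_not_imp_right.2 fun hfT => ?_)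
    exact fundamentalCut_inter_edgeSet_subset _ ⟨hf, not_not.1 hfT⟩
  exact ⟨v, c.transfer _ hedges, hc.transfer hedges⟩

theorem edgeCong_eq_length_of_isCycle (hT : IsSpanningTree P.G T) (he : e ∈ T.edgeSet)
    {v : F} {c : (P.dualTreeInsert T e).Walk v v} (hc : c.IsCycle) :
    edgeCong P.G T e = c.length := by
  have hle := dualTreeInsert_le (T := T) (edgeSet_mono hT.1 he)
  set D := P.G.edgeSet ∩ P.d ⁻¹' c.edgeSet
  have hcD : P.d '' D = c.edgeSet := by
    rw [Set.image_inter_preimage, P.dBij.image_eq]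
    exact Set.inter_eq_right.2 (Set.Subset.trans c.edges_subset_edgeSet (edgeSet_mono hle))
  have hmin : IsMinCut P.G D := (P.minCut_iff_cycle D Set.inter_subset_left).2
    ⟨v, c.mapLe hle, hc.mapLe hle, by rw [hcD, Walk.edges_mapLe_eq_edges]; rfl⟩
  have hDT : D ∩ T.edgeSet ⊆ {e} := fun f ⟨⟨hfG, hfc⟩, hfT⟩ =>
    ((d_mem_edgeSet_dualTreeInsert_iff (edgeSet_mono hT.1 he) hfG).1
      (c.edges_subset_edgeSet hfc)).resolve_right (not_not.2 hfT)
  calc edgeCong P.G T e = (P.G.fundamentalCut T e).ncard := rfl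
    _ = D.ncard := by
      rw [eq_fundamentalCut_of_inter_edgeSet_subset hT.1 hT.2.connected he hmin.1 hmin.2.1 hDT]
    _ = (P.d '' D).ncard := (P.dBij.injOn.mono Set.inter_subset_left).ncard_image.symm
    _ = c.length := by rw [hcD, hc.isTrail.ncard_edgeSet]

end PlaneDual

theorem stmt6 (P : PlaneDual V F) (T : SimpleGraph V) (hT : IsSpanningTree P.G T)
    (e : Sym2 V) (he : e ∈ T.edgeSet) :
    (∃ (v : F) (c : (SimpleGraph.fromEdgeSet
        (insert (P.d e) (dualTree P T).edgeSet)).Walk v v), c.IsCycle) ∧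
    ∀ (v : F) (c : (SimpleGraph.fromEdgeSet
        (insert (P.d e) (dualTree P T).edgeSet)).Walk v v), c.IsCycle →
      edgeCong P.G T e = c.length :=
  ⟨P.exists_isCycle_dualTreeInsert hT he, fun _ _ => P.edgeCong_eq_length_of_isCycle hT he⟩
end
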